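/- Let β > 1 be a real number. Then every word w with B̄(w) < β belongs to W(β), and every word w ∈ W(β) satisfies B̄(w) ≤ β. -/

import Mathlib

/-- The shift map iterated `k` times: `(shift k w) i = w (i + k)`,
so `shift k w = w_k w_{k+1} w_{k+2} …`. -/
def shift (k : ℕ) (w : ℕ → ℕ) : ℕ → ℕ := fun i => w (i + k)

/-- Strict lexicographic order on infinite words: `v < w` iff there is an index `i`
with `v j = w j` for all `j < i` and `v i < w i`. -/
def LexLt (v w : ℕ → ℕ) : Prop := ∃ i, (∀ j < i, v j = w j) ∧ v i < w i

/-- Weak lexicographic order: `v ≤ w` iff `v < w` or `v = w`. -/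
def LexLe (v w : ℕ → ℕ) : Prop := LexLt v w ∨ v = w

/-- A word is a bounded sequence of natural numbers. -/
def IsWord (w : ℕ → ℕ) : Prop := ∃ M, ∀ i, w i ≤ M

/-- `fword w β = ∑_{i ≥ 0} w_i β^{-(i+1)} = w_0/β + w_1/β² + …`. -/
noncomputable def fword (w : ℕ → ℕ) (β : ℝ) : ℝ := ∑' i : ℕ, (w i : ℝ) / β ^ (i + 1)

open Classical in
/-- `B̂(w)`: zero for the zero word, and otherwise `inf {β > 1 : f_w(β) ≤ 1}`. -/
noncomputable def Bhat (w : ℕ → ℕ) : ℝ :=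
  if w = fun _ => 0 then 0 else sInf {β : ℝ | 1 < β ∧ fword w β ≤ 1}

/-- `B̄(w) = sup_{j ≥ 0} B̂(σ^j w)`. -/
noncomputable def Bbar (w : ℕ → ℕ) : ℝ := ⨆ j : ℕ, Bhat (shift j w)

/-- The sequence `A_i` in the β-expansion of `β`: `A_0 = β`, `A_{i+1} = β (A_i - ⌊A_i⌋)`. -/
noncomputable def betaA (β : ℝ) : ℕ → ℝ
  | 0 => β
  | i + 1 => β * (betaA β i - (⌊betaA β i⌋₊ : ℝ))

/-- The β-expansion of `β`: the word `a` with `a_i = ⌊A_i⌋`. -/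
noncomputable def betaExp (β : ℝ) : ℕ → ℕ := fun i => ⌊betaA β i⌋₊

/-- The domain `W(β)` of the β-shift: all words `w` with `σ^k w < a` lexicographically
for every `k ≥ 0`, where `a` is the β-expansion of `β`. -/
def Wset (β : ℝ) : Set (ℕ → ℕ) :=
  {w | IsWord w ∧ ∀ k : ℕ, LexLt (shift k w) (betaExp β)}

/-- `π` is a permutation of `{1, …, n}` (viewed as a map `ℕ → ℕ`). -/
def IsPerm (n : ℕ) (π : ℕ → ℕ) : Prop := Set.BijOn π (Set.Icc 1 n) (Set.Icc 1 n)

/-- The word `w` induces the permutation `π` of `{1, …, n}`: for all `1 ≤ i, j ≤ n`,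
`π(i) < π(j)` iff `σ^{i-1} w < σ^{j-1} w` lexicographically. -/
def Induces (n : ℕ) (w : ℕ → ℕ) (π : ℕ → ℕ) : Prop :=
  ∀ i ∈ Set.Icc 1 n, ∀ j ∈ Set.Icc 1 n,
    (π i < π j ↔ LexLt (shift (i - 1) w) (shift (j - 1) w))

/-- `π ∈ Al(Σ_β)`: some word in `W(β)` induces `π`. -/
def Allowed (β : ℝ) (n : ℕ) (π : ℕ → ℕ) : Prop := ∃ w ∈ Wset β, Induces n w π

/-- The shift-complexity `B(π) = inf {β > 1 : π ∈ Al(Σ_β)}`. -/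
noncomputable def Bperm (n : ℕ) (π : ℕ → ℕ) : ℝ :=
  sInf {β : ℝ | 1 < β ∧ Allowed β n π}

/-- `ρ_m` is the permutation `1 m 2 (m-1) 3 (m-2) …` of `{1, …, m}`:
`ρ(2i-1) = i` and `ρ(2i) = m+1-i`. -/
def IsRho (m : ℕ) (ρ : ℕ → ℕ) : Prop :=
  IsPerm m ρ ∧ (∀ i, 1 ≤ i → 2 * i - 1 ≤ m → ρ (2 * i - 1) = i) ∧
    (∀ i, 1 ≤ i → 2 * i ≤ m → ρ (2 * i) = m + 1 - i)

/-!
Write `a` for the β-expansion of `β` and `f_v(γ) = ∑ v_i γ^{-(i+1)}`. The remainders satisfy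
`∑_{j<n} a_j β^{-(j+1)} + A_n β^{-(n+1)} = 1` with `0 ≤ A_n ≤ β`, so `f_a(β) = 1`, and a word that
is lexicographically at least `a` has `f_v(γ) > 1` for every `1 < γ < β`. Since `f_v` is
antitone in `γ`, `B̄(w) < γ` forces `f_{σ^k w}(γ) ≤ 1` for all `k`, hence `σ^k w < a`.

Conversely, if every shift of `w` lies below `a` and `C = sup_k f_{σ^k w}(β)`, then comparing
`σ^k w` with `a` at the first difference gives `f_{σ^k w}(β) ≤ 1 + (C - 1)/β`; so `C > 1` is
impossible, i.e. `f_{σ^k w}(β) ≤ 1` and `B̂(σ^k w) ≤ β` for all `k`.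
-/

open Finset Filter

lemma IsWord.shift {w : ℕ → ℕ} (hw : IsWord w) (k : ℕ) : IsWord (shift k w) :=
  let ⟨M, hM⟩ := hw
  ⟨M, fun _ => hM _⟩

lemma shift_shift (k j : ℕ) (w : ℕ → ℕ) : shift k (shift j w) = shift (k + j) w := by
  funext i
  simp only [shift, add_assoc]

lemma lexLt_trichotomy (v w : ℕ → ℕ) : LexLt v w ∨ v = w ∨ LexLt w v :=
  lt_trichotomy (toLex v) (toLex w)

section BetaExpansion

variable {β : ℝ}

lemma betaA_nonneg (hβ : 1 < β) : ∀ n, 0 ≤ betaA β n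
  | 0 => by simp only [betaA]; linarith
  | n + 1 => by
    have := Nat.floor_le (betaA_nonneg hβ n)
    simp only [betaA]
    exact mul_nonneg (by linarith) (by linarith)

lemma betaA_succ_lt (hβ : 1 < β) (n : ℕ) : betaA β (n + 1) < β := by
  have := Nat.lt_floor_add_one (betaA β n)
  simp only [betaA]
  nlinarith

lemma betaA_le (hβ : 1 < β) : ∀ n, betaA β n ≤ β
  | 0 => le_rfl
  | n + 1 => (betaA_succ_lt hβ n).le

lemma isWord_betaExp (hβ : 1 < β) : IsWord (betaExp β) :=
  ⟨⌊β⌋₊, fun i => Nat.floor_le_floor (betaA_le hβ i)⟩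

lemma one_le_betaExp_zero (hβ : 1 < β) : 1 ≤ betaExp β 0 :=
  Nat.le_floor (by simpa [betaA] using hβ.le)

lemma sum_betaExp_add_betaA (hβ : 1 < β) (n : ℕ) :
    ∑ j ∈ range n, (betaExp β j : ℝ) / β ^ (j + 1) + betaA β n / β ^ (n + 1) = 1 := by
  have hβ0 : β ≠ 0 := by positivity
  induction n with
  | zero => simp [betaA, hβ0]
  | succ n ih =>
    rw [sum_range_succ, ← ih, betaA, betaExp]
    field_simp
    ring

end BetaExpansion

section SeriesValue

variable {v : ℕ → ℕ} {γ : ℝ}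

lemma hasSum_div_pow_succ (hγ : 1 < γ) (M : ℝ) :
    HasSum (fun i : ℕ => M / γ ^ (i + 1)) (M / (γ - 1)) := by
  have hγ0 : 0 < γ := by linarith
  have hgeom := (hasSum_geometric_of_lt_one (inv_nonneg.2 hγ0.le)
    (inv_lt_one_of_one_lt₀ hγ)).mul_left (M / γ)
  have hterm : (fun i : ℕ => M / γ * γ⁻¹ ^ i) = fun i => M / γ ^ (i + 1) := by
    funext i
    rw [pow_succ, inv_pow]
    field_simp
  have hvalue : M / γ * (1 - γ⁻¹)⁻¹ = M / (γ - 1) := by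
    have : γ - 1 ≠ 0 := by linarith
    field_simp
  rwa [hterm, hvalue] at hgeom

lemma summable_fword (hv : IsWord v) (hγ : 1 < γ) :
    Summable (fun i : ℕ => (v i : ℝ) / γ ^ (i + 1)) := by
  obtain ⟨M, hM⟩ := hv
  refine (hasSum_div_pow_succ hγ M).summable.of_nonneg_of_le (fun i => by positivity) fun i => ?_
  gcongr
  exact_mod_cast hM i

lemma fword_le_div_sub_one {M : ℕ} (hM : ∀ i, v i ≤ M) (hγ : 1 < γ) : fword v γ ≤ M / (γ - 1) :=
  hasSum_le (fun i => by gcongr; exact_mod_cast hM i) (summable_fword ⟨M, hM⟩ hγ).hasSum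
    (hasSum_div_pow_succ hγ M)

lemma fword_add_two_le_one {M : ℕ} (hM : ∀ i, v i ≤ M) : fword v (M + 2) ≤ 1 := by
  have hM0 : (0 : ℝ) ≤ M := M.cast_nonneg
  refine (fword_le_div_sub_one hM (by linarith)).trans ?_
  rw [div_le_one (by linarith)]
  linarith

lemma fword_anti (hv : IsWord v) (hγ : 1 < γ) {γ' : ℝ} (h : γ ≤ γ') :
    fword v γ' ≤ fword v γ :=
  (summable_fword hv (hγ.trans_le h)).tsum_le_tsum
    (fun i => div_le_div_of_nonneg_left (by positivity) (by positivity) (by gcongr))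
    (summable_fword hv hγ)

lemma sum_range_le_fword (hv : IsWord v) (hγ : 1 < γ) (n : ℕ) :
    ∑ j ∈ range n, (v j : ℝ) / γ ^ (j + 1) ≤ fword v γ :=
  (summable_fword hv hγ).sum_le_tsum _ fun i _ => by positivity

lemma fword_eq_sum_add_fword_shift (hv : IsWord v) (hγ : 1 < γ) (n : ℕ) :
    fword v γ = ∑ j ∈ range n, (v j : ℝ) / γ ^ (j + 1) + fword (shift n v) γ / γ ^ n := by
  rw [fword, ← (summable_fword hv hγ).sum_add_tsum_nat_add n, fword, ← tsum_div_const]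
  congr 2
  funext i
  rw [shift, div_div, ← pow_add, add_right_comm]

end SeriesValue

section Bhat

variable {v : ℕ → ℕ} {γ : ℝ}

lemma Bhat_le_of_fword_le_one (hγ : 1 < γ) (h : fword v γ ≤ 1) : Bhat v ≤ γ := by
  unfold Bhat
  split_ifs
  · linarith
  · exact csInf_le ⟨1, fun x hx => hx.1.le⟩ ⟨hγ, h⟩

lemma fword_le_one_of_Bhat_lt (hv : IsWord v) (h : Bhat v < γ) :
    fword v γ ≤ 1 := by
  unfold Bhat at h
  split_ifs at h with h0
  · simp [fword, h0]
  · obtain ⟨M, hM⟩ := hv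
    have hne : {β : ℝ | 1 < β ∧ fword v β ≤ 1}.Nonempty :=
      ⟨M + 2, by linarith [M.cast_nonneg (α := ℝ)], fword_add_two_le_one hM⟩
    obtain ⟨γ', ⟨hγ'1, hγ'⟩, hγ'γ⟩ := exists_lt_of_csInf_lt hne h
    exact (fword_anti ⟨M, hM⟩ hγ'1 hγ'γ.le).trans hγ'

lemma Bhat_shift_le_Bbar {w : ℕ → ℕ} (hw : IsWord w) (k : ℕ) : Bhat (shift k w) ≤ Bbar w := by
  obtain ⟨M, hM⟩ := hw
  refine le_ciSup (f := fun j => Bhat (shift j w)) ⟨M + 2, ?_⟩ k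
  rintro _ ⟨j, rfl⟩
  exact Bhat_le_of_fword_le_one (by linarith [M.cast_nonneg (α := ℝ)])
    (fword_add_two_le_one fun i => hM _)

end Bhat

section Comparison

variable {β γ : ℝ} {v : ℕ → ℕ}

lemma one_le_fword_betaExp (hβ : 1 < β) : 1 ≤ fword (betaExp β) β := by
  have hβ0 : 0 < β := by linarith
  have hgap : ∀ n, 1 - fword (betaExp β) β ≤ β⁻¹ ^ n := fun n => by
    have hA : betaA β n / β ^ (n + 1) ≤ β⁻¹ ^ n := by
      rw [inv_pow, div_le_iff₀ (by positivity), pow_succ, ← mul_assoc,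
        inv_mul_cancel₀ (by positivity), one_mul]
      exact betaA_le hβ n
    linarith [sum_betaExp_add_betaA hβ n, sum_range_le_fword (isWord_betaExp hβ) hβ n]
  linarith [ge_of_tendsto' (tendsto_pow_atTop_nhds_zero_of_lt_one (inv_nonneg.2 hβ0.le)
    (inv_lt_one_of_one_lt₀ hβ)) hgap]

lemma one_lt_fword_betaExp (hβ : 1 < β) (hγ : 1 < γ) (hγβ : γ < β) :
    1 < fword (betaExp β) γ := by
  have hword := isWord_betaExp hβ
  refine (one_le_fword_betaExp hβ).trans_lt <| (summable_fword hword hβ).tsum_lt_tsum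
    (i := 0) (fun i => ?_) ?_ (summable_fword hword hγ)
  · exact div_le_div_of_nonneg_left (by positivity) (by positivity) (by gcongr)
  · have : (0 : ℝ) < betaExp β 0 := by exact_mod_cast one_le_betaExp_zero hβ
    simpa using div_lt_div_of_pos_left this (by linarith) hγβ

/-- At the first difference `v_i ≥ a_i + 1`, and the extra `1/γ^{i+1}` outweighs the remainder
`A_{i+1}/β^{i+2} < 1/β^{i+1}` of the expansion. -/
lemma one_lt_fword_of_betaExp_lexLt (hβ : 1 < β) (hγ : 1 < γ) (hγβ : γ ≤ β) (hv : IsWord v)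
    (h : LexLt (betaExp β) v) : 1 < fword v γ := by
  obtain ⟨i, hagree, hlt⟩ := h
  have hγ0 : 0 < γ := by linarith
  have hprefix : ∑ j ∈ range (i + 1), (betaExp β j : ℝ) / β ^ (j + 1)
      ≤ ∑ j ∈ range (i + 1), (betaExp β j : ℝ) / γ ^ (j + 1) :=
    sum_le_sum fun j _ => by gcongr
  have hsplit : ∑ j ∈ range (i + 1), (v j : ℝ) / γ ^ (j + 1)
      = ∑ j ∈ range (i + 1), (betaExp β j : ℝ) / γ ^ (j + 1)
        + ((v i : ℝ) - betaExp β i) / γ ^ (i + 1) := by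
    simp only [sum_range_succ]
    rw [sum_congr rfl fun j hj => by rw [← hagree j (mem_range.1 hj)]]
    ring
  have hexcess : 1 / γ ^ (i + 1) ≤ ((v i : ℝ) - betaExp β i) / γ ^ (i + 1) := by
    gcongr
    have : (betaExp β i : ℝ) + 1 ≤ v i := by exact_mod_cast hlt
    linarith
  have hrem : betaA β (i + 1) / β ^ (i + 1 + 1) < 1 / γ ^ (i + 1) := by
    rw [div_lt_div_iff₀ (by positivity) (by positivity), pow_succ β (i + 1), one_mul]
    calc betaA β (i + 1) * γ ^ (i + 1) < β * γ ^ (i + 1) := by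
          gcongr; exact betaA_succ_lt hβ i
      _ ≤ β ^ (i + 1) * β := by rw [mul_comm]; gcongr
  linarith [sum_betaExp_add_betaA hβ (i + 1), sum_range_le_fword hv hγ (i + 1)]

/-- At the first difference `v_i ≤ a_i - 1`; the lost `1/β^{i+1}` absorbs the tail
`f_{σ^{i+1} v}(β)/β^{i+1} ≤ C/β^{i+1}` except for `(C - 1)/β^{i+1}`. -/
lemma fword_le_div_sub_onexLt_betaExp (hβ : 1 < β) (hv : IsWord v) (h : LexLt v (betaExp β)) {C : ℝ}
    (hC : ∀ n, fword (shift n v) β ≤ C) (hC1 : 1 ≤ C) : fword v β ≤ 1 + (C - 1) / β := by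
  obtain ⟨i, hagree, hlt⟩ := h
  have hsplit := fword_eq_sum_add_fword_shift hv hβ (i + 1)
  rw [sum_range_succ, sum_congr rfl fun j hj => by rw [hagree j (mem_range.1 hj)]] at hsplit
  have hdigit : (v i : ℝ) / β ^ (i + 1) ≤ ((betaExp β i : ℝ) - 1) / β ^ (i + 1) := by
    gcongr
    have : (v i : ℝ) + 1 ≤ betaExp β i := by exact_mod_cast hlt
    linarith
  have htail : fword (shift (i + 1) v) β / β ^ (i + 1) ≤ C / β ^ (i + 1) := by
    gcongr
    exact hC _
  have hexcess : (C - 1) / β ^ (i + 1) ≤ (C - 1) / β :=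
    div_le_div_of_nonneg_left (by linarith) (by linarith) (le_self_pow₀ hβ.le (by omega))
  have hid := sum_betaExp_add_betaA hβ (i + 1)
  rw [sum_range_succ] at hid
  have hA : 0 ≤ betaA β (i + 1) / β ^ (i + 1 + 1) := div_nonneg (betaA_nonneg hβ _) (by positivity)
  have : ((betaExp β i : ℝ) - 1) / β ^ (i + 1) + C / β ^ (i + 1)
      = (betaExp β i : ℝ) / β ^ (i + 1) + (C - 1) / β ^ (i + 1) := by ring
  linarith

lemma fword_shift_le_one_of_mem_Wset (hβ : 1 < β) {w : ℕ → ℕ} (hw : w ∈ Wset β) (k : ℕ) :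
    fword (shift k w) β ≤ 1 := by
  obtain ⟨⟨M, hM⟩, hlex⟩ := hw
  set C := ⨆ k, fword (shift k w) β
  have hbdd : BddAbove (Set.range fun k => fword (shift k w) β) := by
    refine ⟨M / (β - 1), ?_⟩
    rintro _ ⟨k, rfl⟩
    exact fword_le_div_sub_one (fun i => hM _) hβ
  have hCk : ∀ k, fword (shift k w) β ≤ C := fun k => le_ciSup hbdd k
  suffices hC1 : C ≤ 1 from (hCk k).trans hC1
  by_contra! hC1
  have hCle : C ≤ 1 + (C - 1) / β := ciSup_le fun k =>
    fword_le_div_sub_onexLt_betaExp hβ (IsWord.shift ⟨M, hM⟩ k) (hlex k)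
      (fun n => by rw [shift_shift]; exact hCk _) hC1.le
  linarith [div_lt_self (sub_pos.2 hC1) hβ]

end Comparison

/-- Let `β > 1`. Then every word `w` with `B̄(w) < β` belongs to `W(β)`,
and every word `w ∈ W(β)` satisfies `B̄(w) ≤ β`. -/
theorem stmt_11 (β : ℝ) (hβ : 1 < β) :
    (∀ w : ℕ → ℕ, IsWord w → Bbar w < β → w ∈ Wset β) ∧
      (∀ w ∈ Wset β, Bbar w ≤ β) := by
  refine ⟨fun w hw hB => ⟨hw, fun k => ?_⟩, fun w hw => ?_⟩
  · obtain ⟨γ, hγ, hγβ⟩ := exists_between (max_lt hβ hB)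
    rw [max_lt_iff] at hγ
    have hf : fword (shift k w) γ ≤ 1 :=
      fword_le_one_of_Bhat_lt (hw.shift k) ((Bhat_shift_le_Bbar hw k).trans_lt hγ.2)
    rcases lexLt_trichotomy (shift k w) (betaExp β) with h | h | h
    · exact h
    · exact absurd hf (h ▸ one_lt_fword_betaExp hβ hγ.1 hγβ).not_ge
    · exact absurd hf (one_lt_fword_of_betaExp_lexLt hβ hγ.1 hγβ.le (hw.shift k) h).not_ge
  · exact ciSup_le fun j => Bhat_le_of_fword_le_one hβ (fword_shift_le_one_of_mem_Wset hβ hw j)
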